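/- arXiv:2404.13258 — 3 statements merged into one kernel-verified Lean document; each statement's English description precedes it below -/
import Mathlib

section
/- Suppose v : ℝ≥0 → ℝ^{1×m} satisfies v'(t) = −γ v(t) δq(t) δq(t)⊤ and there exist α, T > 0 such that ∫_t^{t+T} δq(s)δq(s)⊤ ds ⪰ α I for all t ≥ 0 (persistency of excitation), with ‖δq(t)‖ uniformly bounded by M. Then ‖v(t)‖ converges to 0 exponentially: there exist k, λ > 0 with ‖v(t)‖ ≤ k e^{−λ t} ‖v(0)‖. -/
open intervalIntegral MeasureTheory

lemma cs_int (f : ℝ → ℝ) (hf : Continuous f) (a b : ℝ) (hab : a < b) :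
    (∫ s in a..b, |f s|) ^ 2 ≤ (b - a) * ∫ s in a..b, (f s) ^ 2 := by
  set I : ℝ := ∫ s in a..b, |f s| with hI
  set c : ℝ := I / (b - a) with hc
  have hba : (0:ℝ) < b - a := by linarith
  have hint1 : IntervalIntegrable (fun s => |f s|) volume a b :=
    (hf.abs).intervalIntegrable a b
  have hint2 : IntervalIntegrable (fun s => (f s) ^ 2) volume a b :=
    (hf.pow 2).intervalIntegrable a b
  have h0 : (0:ℝ) ≤ ∫ s in a..b, (|f s| - c) ^ 2 :=
    intervalIntegral.integral_nonneg hab.le (fun s _ => sq_nonneg _)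
  have hexp : (∫ s in a..b, (|f s| - c) ^ 2)
      = (∫ s in a..b, (f s) ^ 2) - 2 * c * I + (b - a) * c ^ 2 := by
    have : ∀ s, (|f s| - c) ^ 2 = (f s) ^ 2 - (2 * c) * |f s| + c ^ 2 := by
      intro s
      have := sq_abs (f s)
      nlinarith [sq_abs (f s)]
    simp_rw [this]
    rw [intervalIntegral.integral_add (hint2.sub (hint1.const_mul _))
      (intervalIntegrable_const), intervalIntegral.integral_sub hint2 (hint1.const_mul _),
      intervalIntegral.integral_const_mul, intervalIntegral.integral_const]
    ring_nf
    simp [smul_eq_mul]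
    ring
    exact Or.inl hI.symm
  rw [hexp] at h0
  have hc' : c * (b - a) = I := by rw [hc]; exact div_mul_cancel₀ I hba.ne'
  nlinarith [sq_nonneg (I - c * (b-a))]

theorem stmt7 (m : ℕ) (γ M α T : ℝ) (hγ : 0 < γ) (hα : 0 < α) (hT : 0 < T)
    (δq : ℝ → EuclideanSpace ℝ (Fin m)) (hδq : Continuous δq)
    (hM : ∀ t, ‖δq t‖ ≤ M)
    (hPE : ∀ t ≥ (0 : ℝ), ∀ x : EuclideanSpace ℝ (Fin m),
      α * ‖x‖ ^ 2 ≤ ∫ s in t..(t + T), (inner ℝ (δq s) x : ℝ) ^ 2)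
    (v : ℝ → EuclideanSpace ℝ (Fin m))
    (hv : ∀ t, HasDerivAt v (-γ • ((inner ℝ (v t) (δq t) : ℝ) • δq t)) t) :
    ∃ k lam : ℝ, 0 < k ∧ 0 < lam ∧
      ∀ t ≥ (0 : ℝ), ‖v t‖ ≤ k * Real.exp (-lam * t) * ‖v 0‖ := by
  have hM0 : (0:ℝ) ≤ M := le_trans (norm_nonneg _) (hM 0)
  set f : ℝ → ℝ := fun s => (inner ℝ (v s) (δq s) : ℝ) with hf_def
  set g : ℝ → ℝ := fun s => ‖v s‖ ^ 2 with hg_def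
  have hvcont : Continuous v := by
    rw [continuous_iff_continuousAt]; exact fun t => (hv t).continuousAt
  have hfcont : Continuous f := hvcont.inner hδq
  have hg0 : ∀ s, g s = (inner ℝ (v s) (v s) : ℝ) := by
    intro s; exact (real_inner_self_eq_norm_sq (v s)).symm
  have hgderiv : ∀ t, HasDerivAt g (-(2*γ) * f t ^ 2) t := by
    intro t
    have h := (hv t).inner ℝ (hv t)
    have heq : (inner ℝ (v t) (-γ • ((f t) • δq t)) : ℝ)
        + (inner ℝ (-γ • ((f t) • δq t)) (v t) : ℝ) = -(2*γ) * f t ^ 2 := by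
      rw [real_inner_smul_right, real_inner_smul_left, real_inner_smul_right,
        real_inner_smul_left]
      have hft : (inner ℝ (v t) (δq t) : ℝ) = f t := rfl
      have hft2 : (inner ℝ (δq t) (v t) : ℝ) = f t :=
        (real_inner_comm (v t) (δq t)).trans hft
      rw [hft2]; ring
    rw [heq] at h
    have : g = fun s => (inner ℝ (v s) (v s) : ℝ) := funext hg0
    rw [this]
    exact h
  have hgnonneg : ∀ s, 0 ≤ g s := fun s => sq_nonneg _
  have hganti : Antitone g := by
    apply antitone_of_deriv_nonpos
    · exact fun t => (hgderiv t).differentiableAt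
    · intro t
      rw [(hgderiv t).deriv]
      have : 0 ≤ f t ^ 2 := sq_nonneg _
      nlinarith
  -- the constant
  set C : ℝ := 2 + 2 * γ^2 * M^4 * T^2 with hC_def
  have hCpos : 0 < C := by positivity
  set c' : ℝ := max (1 - 2*γ*α/C) (1/2) with hc'_def
  have hc'pos : 0 < c' := lt_of_lt_of_le (by norm_num) (le_max_right _ _)
  have hc'lt1 : c' < 1 := by
    apply max_lt _ (by norm_num)
    have : 0 < 2*γ*α/C := by positivity
    linarith
  -- key contraction step
  have hkey : ∀ t ≥ (0:ℝ), g (t + T) ≤ c' * g t := by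
    intro t ht
    set J : ℝ := ∫ s in t..(t+T), f s ^ 2 with hJ_def
    set I1 : ℝ := ∫ s in t..(t+T), |f s| with hI1_def
    have hJ0 : 0 ≤ J := intervalIntegral.integral_nonneg (by linarith) (fun s _ => sq_nonneg _)
    have hI10 : 0 ≤ I1 := intervalIntegral.integral_nonneg (by linarith) (fun s _ => abs_nonneg _)
    have hCS : I1 ^ 2 ≤ T * J := by
      have := cs_int f hfcont t (t+T) (by linarith)
      simpa using this
    -- FTC for g
    have hftc : g (t+T) - g t = -(2*γ) * J := by
      have := intervalIntegral.integral_eq_sub_of_hasDerivAt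
        (f := g) (f' := fun s => -(2*γ) * f s ^ 2) (a := t) (b := t+T)
        (fun s _ => hgderiv s)
        ((continuous_const.mul (hfcont.pow 2)).intervalIntegrable t (t+T))
      rw [← this, intervalIntegral.integral_const_mul]
    -- bound on ‖v s - v t‖ for s ∈ [t, t+T]
    have hdiff : ∀ s ∈ Set.Icc t (t+T), ‖v s - v t‖ ≤ γ * M * I1 := by
      intro s hs
      have hts : t ≤ s := hs.1
      have hftcv : (∫ r in t..s, (-γ • ((f r) • δq r) : EuclideanSpace ℝ (Fin m))) = v s - v t :=
        intervalIntegral.integral_eq_sub_of_hasDerivAt (fun r _ => hv r)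
          (((hfcont.smul hδq).const_smul (-γ)).intervalIntegrable t s)
      rw [← hftcv]
      calc ‖∫ r in t..s, (-γ • ((f r) • δq r) : EuclideanSpace ℝ (Fin m))‖
          ≤ ∫ r in t..s, ‖(-γ • ((f r) • δq r) : EuclideanSpace ℝ (Fin m))‖ :=
            intervalIntegral.norm_integral_le_integral_norm hts
        _ ≤ ∫ r in t..s, γ * M * |f r| := by
            apply intervalIntegral.integral_mono_on hts
            · exact ((hfcont.smul hδq).const_smul (-γ)).norm.intervalIntegrable t s
            · exact (continuous_const.mul hfcont.abs).intervalIntegrable t s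
            · intro r _
              rw [norm_smul, norm_smul]
              simp only [norm_neg, Real.norm_eq_abs, abs_neg, abs_of_pos hγ]
              have h1 : ‖δq r‖ ≤ M := hM r
              have h2 : 0 ≤ |f r| := abs_nonneg _
              calc γ * (|f r| * ‖δq r‖) ≤ γ * (|f r| * M) := by
                    apply mul_le_mul_of_nonneg_left _ hγ.le
                    exact mul_le_mul_of_nonneg_left h1 h2
                _ = γ * M * |f r| := by ring
        _ ≤ ∫ r in t..(t+T), γ * M * |f r| := by
            apply intervalIntegral.integral_mono_interval (le_refl t) hts hs.2
            · filter_upwards with r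
              positivity
            · exact (continuous_const.mul hfcont.abs).intervalIntegrable t (t+T)
        _ = γ * M * I1 := by
            rw [hI1_def, intervalIntegral.integral_const_mul]
    -- pointwise bound
    have hpt : ∀ s ∈ Set.Icc t (t+T),
        (inner ℝ (δq s) (v t) : ℝ) ^ 2 ≤ 2 * f s ^ 2 + 2 * (M * (γ * M * I1)) ^ 2 := by
      intro s hs
      have hsplit : (inner ℝ (δq s) (v t) : ℝ)
          = (inner ℝ (δq s) (v s) : ℝ) + (inner ℝ (δq s) (v t - v s) : ℝ) := by
        rw [← inner_add_right]; congr 1; abel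
      have h1 : (inner ℝ (δq s) (v s) : ℝ) = f s := real_inner_comm _ _
      have h2 : |(inner ℝ (δq s) (v t - v s) : ℝ)| ≤ M * (γ * M * I1) := by
        calc |(inner ℝ (δq s) (v t - v s) : ℝ)| ≤ ‖δq s‖ * ‖v t - v s‖ :=
              abs_real_inner_le_norm _ _
          _ ≤ M * (γ * M * I1) := by
              apply mul_le_mul (hM s) _ (norm_nonneg _) hM0
              rw [← norm_neg, neg_sub]
              exact hdiff s hs
      have h2' : (inner ℝ (δq s) (v t - v s) : ℝ) ^ 2 ≤ (M * (γ * M * I1)) ^ 2 := by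
        rw [← sq_abs]
        exact pow_le_pow_left₀ (abs_nonneg _) h2 2
      rw [hsplit, h1]
      nlinarith [sq_nonneg (f s - (inner ℝ (δq s) (v t - v s) : ℝ))]
    -- integrate the pointwise bound
    have hint : α * g t ≤ 2 * J + T * (2 * (M * (γ * M * I1)) ^ 2) := by
      have hpe := hPE t ht (v t)
      calc α * g t = α * ‖v t‖ ^ 2 := by rw [hg_def]
        _ ≤ ∫ s in t..(t+T), (inner ℝ (δq s) (v t) : ℝ) ^ 2 := hpe
        _ ≤ ∫ s in t..(t+T), (2 * f s ^ 2 + 2 * (M * (γ * M * I1)) ^ 2) := by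
            apply intervalIntegral.integral_mono_on (by linarith)
            · exact ((hδq.inner continuous_const).pow 2).intervalIntegrable t (t+T)
            · exact ((continuous_const.mul (hfcont.pow 2)).add continuous_const).intervalIntegrable t (t+T)
            · exact hpt
        _ = 2 * J + T * (2 * (M * (γ * M * I1)) ^ 2) := by
            rw [intervalIntegral.integral_add (f := fun s => 2 * f s ^ 2) ((continuous_const.mul (hfcont.pow 2)).intervalIntegrable _ _)
              intervalIntegrable_const, intervalIntegral.integral_const_mul,
              intervalIntegral.integral_const]
            simp only [smul_eq_mul, hJ_def]
            ring
    -- combine: α g t ≤ C * J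
    have hCJ : α * g t ≤ C * J := by
      have hexp : 2 * J + T * (2 * (M * (γ * M * I1)) ^ 2)
          = 2 * J + 2 * T * M ^ 2 * γ ^2 * M ^ 2 * I1 ^ 2 := by ring
      rw [hexp] at hint
      have h5 : 2 * T * M ^ 2 * γ ^2 * M ^ 2 * I1 ^ 2
          ≤ 2 * T * M ^ 2 * γ ^2 * M ^ 2 * (T * J) :=
        mul_le_mul_of_nonneg_left hCS (by positivity)
      have h6 : C * J = 2 * J + 2 * T * M ^ 2 * γ ^2 * M ^ 2 * (T * J) := by
        rw [hC_def]; ring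
      linarith
    -- conclude
    have hgT : g (t + T) = g t - 2 * γ * J := by linarith [hftc]
    have hc1 : (1 - 2*γ*α/C) * g t ≤ c' * g t :=
      mul_le_mul_of_nonneg_right (le_max_left _ _) (hgnonneg t)
    have : g (t + T) ≤ (1 - 2*γ*α/C) * g t := by
      rw [hgT]
      have hJge : α * g t / C ≤ J := by
        rw [div_le_iff₀ hCpos]; linarith [hCJ]
      have : 2 * γ * (α * g t / C) ≤ 2 * γ * J :=
        mul_le_mul_of_nonneg_left hJge (by linarith)
      have heq : (1 - 2*γ*α/C) * g t = g t - 2 * γ * (α * g t / C) := by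
        field_simp
      linarith
    linarith
  -- iterate
  have hiter : ∀ n : ℕ, g (n * T) ≤ c' ^ n * g 0 := by
    intro n
    induction n with
    | zero => simp
    | succ n ih =>
      have h1 : ((n:ℝ) + 1) * T = n * T + T := by ring
      have h2 := hkey (n * T) (by positivity)
      calc g ((↑(n+1)) * T) = g ((n:ℝ) * T + T) := by push_cast; rw [h1]
        _ ≤ c' * g ((n:ℝ) * T) := h2
        _ ≤ c' * (c' ^ n * g 0) := mul_le_mul_of_nonneg_left ih hc'pos.le
        _ = c' ^ (n+1) * g 0 := by ring
  -- final constants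
  refine ⟨Real.sqrt c'⁻¹, -(Real.log c') / (2*T), Real.sqrt_pos.2 (by positivity), ?_, ?_⟩
  · have : Real.log c' < 0 := Real.log_neg hc'pos hc'lt1
    exact div_pos (by linarith) (by linarith)
  · intro t ht
    set lam : ℝ := -(Real.log c') / (2*T) with hlam_def
    set n : ℕ := ⌊t / T⌋₊ with hn_def
    have hlog : Real.log c' < 0 := Real.log_neg hc'pos hc'lt1
    have hnle : (n:ℝ) * T ≤ t := by
      have := Nat.floor_le (by positivity : (0:ℝ) ≤ t / T)
      calc (n:ℝ) * T ≤ (t / T) * T := mul_le_mul_of_nonneg_right this hT.le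
        _ = t := by field_simp
    have hltn : t / T < n + 1 := Nat.lt_floor_add_one _
    -- g t ≤ c'^n * g 0
    have hgt : g t ≤ c' ^ n * g 0 := le_trans (hganti hnle) (hiter n)
    -- c'^n ≤ c'⁻¹ * exp (-(2*lam) * t)
    have hpow : c' ^ n ≤ c'⁻¹ * Real.exp (-(2*lam) * t) := by
      have h1 : c' ^ n = Real.exp (n * Real.log c') := by
        rw [← Real.exp_log hc'pos, ← Real.exp_nat_mul, Real.exp_log hc'pos]
      have h2 : (n:ℝ) * Real.log c' ≤ (t / T - 1) * Real.log c' := by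
        apply mul_le_mul_of_nonpos_right _ hlog.le
        linarith
      have h3 : (t / T - 1) * Real.log c' = -(2*lam) * t + (- Real.log c') := by
        rw [hlam_def]; field_simp; ring
      calc c' ^ n = Real.exp (n * Real.log c') := h1
        _ ≤ Real.exp ((t / T - 1) * Real.log c') := Real.exp_le_exp.2 h2
        _ = Real.exp (-(2*lam) * t) * Real.exp (- Real.log c') := by
            rw [h3, Real.exp_add]
        _ = c'⁻¹ * Real.exp (-(2*lam) * t) := by
            rw [Real.exp_neg, Real.exp_log hc'pos]; ring
    -- conclude
    have hgbound : g t ≤ c'⁻¹ * Real.exp (-(2*lam) * t) * g 0 :=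
      le_trans hgt (mul_le_mul_of_nonneg_right hpow (hgnonneg 0))
    have hrhs : (Real.sqrt c'⁻¹ * Real.exp (-lam * t) * ‖v 0‖) ^ 2
        = c'⁻¹ * Real.exp (-(2*lam) * t) * g 0 := by
      have h1 : Real.sqrt c'⁻¹ ^ 2 = c'⁻¹ := Real.sq_sqrt (by positivity)
      have h2 : Real.exp (-lam * t) ^ 2 = Real.exp (-(2*lam) * t) := by
        rw [← Real.exp_nat_mul]; congr 1; push_cast; ring
      rw [mul_pow, mul_pow, h1, h2, hg_def]
    have : ‖v t‖ ^ 2 ≤ (Real.sqrt c'⁻¹ * Real.exp (-lam * t) * ‖v 0‖) ^ 2 := by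
      rw [hrhs]; exact hgbound
    calc ‖v t‖ = Real.sqrt (‖v t‖ ^ 2) := (Real.sqrt_sq (norm_nonneg _)).symm
      _ ≤ Real.sqrt ((Real.sqrt c'⁻¹ * Real.exp (-lam * t) * ‖v 0‖) ^ 2) :=
          Real.sqrt_le_sqrt this
      _ = Real.sqrt c'⁻¹ * Real.exp (-lam * t) * ‖v 0‖ :=
          Real.sqrt_sq (by positivity)
end

section
/- Consider the linear ODE system u' = −η((Ĉ⊤Ĉ + μI)u − Ĉ⊤ē), ē' = −k_P C u, where Ĉ = C + C̃ with C, C̃ ∈ ℝ^{1×m} fixed row vectors, η, k_P, μ > 0. If ‖C̃‖ < min{μ, Ĉ(Ĉ⊤Ĉ+μI)⁻¹Ĉ⊤}, then the origin (u, ē) = (0, 0) is globally exponentially stable. -/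
open Matrix Finset Real

set_option maxHeartbeats 2000000 in
lemma keyineq (A B D K ε ρ lam c2 η kP μ nc2 na2 ca : ℝ) (X E W R UU CU : ℝ)
    (hη : 0<η) (hkP : 0<kP) (hμ : 0<μ) (hna : 0<na2) (hca : 0<ca) (hnc2 : 0≤nc2)
    (hA : A = η*(μ+na2)) (hB : B = η*na2) (hD : D = kP*ca/na2)
    (hε' : 0<ε) (hε1 : ε ≤ A/2) (hε2' : ε*(16*A) ≤ B*D)
    (hKbig : 4*ε^2*kP^2*nc2/(D*A) + 2*B*kP^2*nc2/ε + 2*η*μ ≤ 2*K*η*μ)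
    (hρ1 : ρ ≤ D*A/2) (hρ2 : ρ ≤ ε*B) (hρ3 : ρ ≤ 2*η*μ) (hρ' : 0<ρ)
    (hc2 : c2 = D+ε+B+K) (hK' : 0<K) (hρlam : ρ = 2*lam*c2) (hlam : 0 ≤ lam)
    (hW2 : W^2 ≤ nc2*R) (hR0 : 0 ≤ R)
    (hCU : CU = W + ca/na2*X) (hUU : UU = R + X^2/na2) :
    D*(2*X*(-A*X + B*E)) - 2*ε*((-A*X + B*E)*E + X*(-kP*CU)) + B*(2*E*(-kP*CU))
      + K*((-2*η*(X^2 + μ*UU - E*X)) - (2*X*(-A*X + B*E))/na2)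
    ≤ -(2*lam)*(D*X^2 - 2*ε*(X*E) + B*E^2 + K*(UU - X^2/na2)) := by
  have hA' : 0 < A := by rw [hA]; positivity
  have hB' : 0 < B := by rw [hB]; positivity
  have hD' : 0 < D := by rw [hD]; positivity
  have hc2' : 0 < c2 := by rw [hc2]; positivity
  have hid : D*(2*X*(-A*X + B*E)) - 2*ε*((-A*X + B*E)*E + X*(-kP*CU)) + B*(2*E*(-kP*CU))
      + K*((-2*η*(X^2 + μ*UU - E*X)) - (2*X*(-A*X + B*E))/na2)
      = -2*D*(A-ε)*X^2 + 2*ε*A*(X*E) - 2*ε*B*E^2 + 2*ε*kP*(X*W)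
        - 2*B*kP*(E*W) - 2*K*η*μ*R := by
    rw [hCU, hUU, hA, hB, hD]
    field_simp
    ring
  have hVt : D*X^2 - 2*ε*(X*E) + B*E^2 + K*(UU - X^2/na2)
      = D*X^2 - 2*ε*(X*E) + B*E^2 + K*R := by rw [hUU]; ring
  have y1 : 2*ε*A*(X*E) ≤ D*A/4*X^2 + ε*B/4*E^2 := by
    have hnum : 0 ≤ A*(D*X-4*ε*E)^2 + ε*(B*D - 16*ε*A)*E^2 := by
      have h0 : 0 ≤ B*D - 16*ε*A := by linarith
      exact add_nonneg (mul_nonneg hA'.le (sq_nonneg _))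
        (mul_nonneg (mul_nonneg hε'.le h0) (sq_nonneg E))
    have hdiff : D*A/4*X^2 + ε*B/4*E^2 - 2*ε*A*(X*E)
        = (A*(D*X-4*ε*E)^2 + ε*(B*D - 16*ε*A)*E^2)/(4*D) := by
      field_simp; ring
    linarith [div_nonneg hnum (by positivity : (0:ℝ) ≤ 4*D), hdiff.ge, hdiff.le]
  have y2 : 2*ε*kP*(X*W) ≤ D*A/4*X^2 + 4*ε^2*kP^2*nc2/(D*A)*R := by
    have hnum : 0 ≤ (D*A*X - 4*ε*kP*W)^2 + 16*ε^2*kP^2*(nc2*R - W^2) :=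
      add_nonneg (sq_nonneg _)
        (mul_nonneg (by positivity) (by linarith : (0:ℝ) ≤ nc2*R - W^2))
    have hdiff : D*A/4*X^2 + 4*ε^2*kP^2*nc2/(D*A)*R - 2*ε*kP*(X*W)
        = ((D*A*X - 4*ε*kP*W)^2 + 16*ε^2*kP^2*(nc2*R - W^2))/(4*D*A) := by
      field_simp; ring
    linarith [div_nonneg hnum (by positivity : (0:ℝ) ≤ 4*D*A)]
  have y3 : -(2*B*kP)*(E*W) ≤ ε*B/2*E^2 + 2*B*kP^2*nc2/ε*R := by
    have hnum : 0 ≤ (ε*E + 2*kP*W)^2 + 4*kP^2*(nc2*R - W^2) :=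
      add_nonneg (sq_nonneg _)
        (mul_nonneg (by positivity) (by linarith : (0:ℝ) ≤ nc2*R - W^2))
    have hdiff : ε*B/2*E^2 + 2*B*kP^2*nc2/ε*R + 2*B*kP*(E*W)
        = ((ε*E + 2*kP*W)^2 + 4*kP^2*(nc2*R - W^2))*B/(2*ε) := by
      field_simp; ring
    have hrhs : 0 ≤ ((ε*E + 2*kP*W)^2 + 4*kP^2*(nc2*R - W^2))*B/(2*ε) := by positivity
    linarith
  have hx : 2*D*ε*X^2 ≤ D*A*X^2 := by
    have h := mul_nonneg (mul_nonneg hD'.le (by linarith : (0:ℝ) ≤ A - 2*ε)) (sq_nonneg X)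
    linarith [h]
  have hKR : (4*ε^2*kP^2*nc2/(D*A) + 2*B*kP^2*nc2/ε)*R ≤ (2*K*η*μ - 2*η*μ)*R :=
    mul_le_mul_of_nonneg_right (by linarith) hR0
  have hρX : ρ*X^2 ≤ D*A/2*X^2 := mul_le_mul_of_nonneg_right hρ1 (sq_nonneg X)
  have hρE : ρ*E^2 ≤ ε*B*E^2 := mul_le_mul_of_nonneg_right hρ2 (sq_nonneg E)
  have hρR : ρ*R ≤ 2*η*μ*R := mul_le_mul_of_nonneg_right hρ3 hR0
  have step1 : D*(2*X*(-A*X + B*E)) - 2*ε*((-A*X + B*E)*E + X*(-kP*CU)) + B*(2*E*(-kP*CU))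
      + K*((-2*η*(X^2 + μ*UU - E*X)) - (2*X*(-A*X + B*E))/na2)
      ≤ -(ρ*X^2 + ρ*E^2 + ρ*R) := by
    rw [hid]
    linarith [y1, y2, y3, hx, hKR, hρX, hρE, hρR,
      mul_nonneg (mul_nonneg hε'.le hB'.le) (sq_nonneg E)]
  have hVle2 : D*X^2 - 2*ε*(X*E) + B*E^2 + K*R ≤ c2*(X^2 + E^2 + R) := by
    rw [hc2]
    linarith [mul_nonneg hε'.le (sq_nonneg (X+E)), mul_nonneg hB'.le (sq_nonneg X),
      mul_nonneg hK'.le (sq_nonneg X), mul_nonneg hD'.le (sq_nonneg E),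
      mul_nonneg hK'.le (sq_nonneg E), mul_nonneg (by linarith : (0:ℝ) ≤ D+ε+B) hR0]
  have step2 : -(ρ*X^2 + ρ*E^2 + ρ*R) ≤ -(2*lam)*(D*X^2 - 2*ε*(X*E) + B*E^2 + K*(UU - X^2/na2)) := by
    rw [hVt]
    have h := mul_le_mul_of_nonneg_left hVle2 (by linarith : (0:ℝ) ≤ 2*lam)
    have heq : ρ*X^2 + ρ*E^2 + ρ*R = 2*lam*c2*(X^2+E^2+R) := by rw [hρlam]; ring
    linarith [h, heq.le, heq.ge]
  linarith


set_option maxHeartbeats 2000000 in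
lemma aux (m : ℕ) (a c : Fin m → ℝ)
    (η kP μ : ℝ) (hη : 0 < η) (hkP : 0 < kP) (hμ : 0 < μ)
    (hna : 0 < ∑ j, a j ^ 2) (hca : 0 < ∑ j, c j * a j)
    (u : ℝ → Fin m → ℝ) (eb : ℝ → ℝ)
    (hu : ∀ t j, HasDerivAt (fun s => u s j)
      (-η * ((∑ j', a j * a j' * u t j') + μ * u t j - a j * eb t)) t)
    (heb : ∀ t, HasDerivAt eb (-kP * ∑ j, c j * u t j) t) :
    ∃ k lam : ℝ, 0 < k ∧ 0 < lam ∧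
      ∀ t ≥ (0 : ℝ), Real.sqrt ((∑ j, u t j ^ 2) + eb t ^ 2)
        ≤ k * Real.exp (-lam * t) * Real.sqrt ((∑ j, u 0 j ^ 2) + eb 0 ^ 2) := by
  set na2 : ℝ := ∑ j, a j ^ 2 with hna2
  set ca : ℝ := ∑ j, c j * a j with hcaa
  set nc2 : ℝ := ∑ j, c j ^ 2 with hnc2
  have hnc2' : 0 ≤ nc2 := Finset.sum_nonneg fun j _ => sq_nonneg _
  set s : ℝ := μ + na2 with hs
  have hs' : 0 < s := by positivity
  set A : ℝ := η * s with hA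
  set B : ℝ := η * na2 with hB
  set D : ℝ := kP * ca / na2 with hD
  have hA' : 0 < A := by positivity
  have hB' : 0 < B := by positivity
  have hD' : 0 < D := by positivity
  clear_value na2 ca nc2 s A B D
  set ε : ℝ := min (A/2) (B*D/(16*A)) with hε
  have hε' : 0 < ε := lt_min (by positivity) (by positivity)
  have hε1 : ε ≤ A/2 := min_le_left _ _
  have hε2 : ε ≤ B*D/(16*A) := min_le_right _ _
  clear_value ε
  set K : ℝ := (4*ε^2*kP^2*nc2/(D*A) + 2*B*kP^2*nc2/ε)/(2*η*μ) + 1 with hK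
  have hK' : 0 < K := by positivity
  have hKbig : 4*ε^2*kP^2*nc2/(D*A) + 2*B*kP^2*nc2/ε + 2*η*μ ≤ 2*K*η*μ := by
    have h2 : (2*η*μ) ≠ 0 := by positivity
    have : 2*K*η*μ = 4*ε^2*kP^2*nc2/(D*A) + 2*B*kP^2*nc2/ε + 2*η*μ := by
      rw [hK]; field_simp
    linarith
  clear_value K
  set q : ℝ → ℝ := fun t => ∑ j, a j * u t j with hqdef
  set U : ℝ → ℝ := fun t => ∑ j, u t j ^ 2 with hUdef
  set cu : ℝ → ℝ := fun t => ∑ j, c j * u t j with hcudef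
  have hqd : ∀ t, HasDerivAt q (-A*q t + B*eb t) t := by
    intro t
    have h := HasDerivAt.sum (fun (j : Fin m) (_ : j ∈ Finset.univ) => (hu t j).const_mul (a j))
    have e1 : (∑ j, a j * (-η * ((∑ j', a j * a j' * u t j') + μ * u t j - a j * eb t)))
        = -A*q t + B*eb t := by
      have hterm : ∀ j : Fin m, a j * (-η * ((∑ j', a j * a j' * u t j') + μ * u t j - a j * eb t))
          = (-η*(q t) + η*eb t) * a j^2 + (-(η*μ)) * (a j * u t j) := by
        intro j
        have h2 : (∑ j', a j * a j' * u t j') = a j * q t := by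
          simp only [hqdef]; rw [Finset.mul_sum]; exact Finset.sum_congr rfl (fun _ _ => by ring)
        rw [h2]; simp only [hqdef]; ring
      rw [Finset.sum_congr rfl (fun j _ => hterm j), Finset.sum_add_distrib,
        ← Finset.mul_sum, ← Finset.mul_sum]
      simp only [hqdef, hA, hB, hs, hna2]; ring
    rw [← e1]; rw [Finset.sum_fn] at h; exact h
  have hUd : ∀ t, HasDerivAt U (-2*η*(q t^2 + μ*U t - eb t*q t)) t := by
    intro t
    have h := HasDerivAt.sum (fun (j : Fin m) (_ : j ∈ Finset.univ) => (hu t j).pow 2)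
    rw [Finset.sum_fn] at h
    refine h.congr_deriv ?_
    have hterm : ∀ j : Fin m, ((2:ℕ):ℝ) * u t j ^ (2-1) * (-η * ((∑ j', a j * a j' * u t j') + μ * u t j - a j * eb t))
        = (-2*η*q t + 2*η*eb t) * (a j * u t j) + (-(2*η*μ)) * (u t j^2) := by
      intro j
      have h2 : (∑ j', a j * a j' * u t j') = a j * q t := by
        simp only [hqdef]; rw [Finset.mul_sum]; exact Finset.sum_congr rfl (fun _ _ => by ring)
      rw [h2]; push_cast; ring
    rw [Finset.sum_congr rfl (fun j _ => hterm j), Finset.sum_add_distrib,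
      ← Finset.mul_sum, ← Finset.mul_sum]
    simp only [hqdef, hUdef]; ring
  set V : ℝ → ℝ := fun t => D*q t^2 - 2*ε*(q t*eb t) + B*eb t^2 + K*(U t - q t^2/na2) with hVdef
  set Vd : ℝ → ℝ := fun t => D*(2*q t*(-A*q t + B*eb t))
      - 2*ε*((-A*q t + B*eb t)*eb t + q t*(-kP*cu t))
      + B*(2*eb t*(-kP*cu t))
      + K*((-2*η*(q t^2 + μ*U t - eb t*q t)) - (2*q t*(-A*q t + B*eb t))/na2) with hVddef
  have hVd : ∀ t, HasDerivAt V (Vd t) t := by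
    intro t
    have hq2 : HasDerivAt (fun s => q s^2) (2*q t*(-A*q t + B*eb t)) t := by
      have := (hqd t).pow 2
      norm_num at this
      exact this.congr_deriv (by ring)
    have hebd : HasDerivAt eb (-kP*cu t) t := heb t
    have he2 : HasDerivAt (fun s => eb s^2) (2*eb t*(-kP*cu t)) t := by
      have := hebd.pow 2
      norm_num at this
      exact this.congr_deriv (by ring)
    have hqe : HasDerivAt (fun s => q s * eb s) ((-A*q t + B*eb t)*eb t + q t*(-kP*cu t)) t :=
      (hqd t).mul hebd
    exact (((hq2.const_mul D).sub (hqe.const_mul (2*ε))).add (he2.const_mul B)).add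
      (((hUd t).sub (hq2.div_const na2)).const_mul K)
  have hU0 : ∀ t, 0 ≤ U t := fun t => Finset.sum_nonneg fun j _ => sq_nonneg _
  have hcs : ∀ t, q t^2 ≤ na2 * U t := by
    intro t
    have h := Finset.sum_mul_sq_le_sq_mul_sq Finset.univ a (u t)
    simpa [hqdef, hUdef, hna2] using h
  have hR : ∀ t, 0 ≤ U t - q t^2/na2 := by
    intro t
    rw [sub_nonneg, div_le_iff₀ hna]
    linarith [hcs t]
  have hW : ∀ t, (cu t - ca/na2*q t)^2 ≤ nc2 * (U t - q t^2/na2) := by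
    intro t
    have h1 : cu t - ca/na2*q t = ∑ j, c j * (u t j - q t/na2 * a j) := by
      have e : ∀ j : Fin m, c j * (u t j - q t/na2 * a j)
          = c j * u t j - q t/na2 * (c j * a j) := fun j => by ring
      rw [Finset.sum_congr rfl (fun j _ => e j), Finset.sum_sub_distrib, ← Finset.mul_sum]
      simp only [hcudef, hcaa]
      field_simp
    have h2 : U t - q t^2/na2 = ∑ j, (u t j - q t/na2 * a j)^2 := by
      have e : ∀ j : Fin m, (u t j - q t/na2 * a j)^2
          = u t j^2 - (2*q t/na2)*(a j * u t j) + (q t/na2)^2 * a j^2 := fun j => by ring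
      rw [Finset.sum_congr rfl (fun j _ => e j)]
      rw [Finset.sum_add_distrib, Finset.sum_sub_distrib, ← Finset.mul_sum, ← Finset.mul_sum]
      simp only [hUdef, hqdef, ← hna2]
      field_simp
      ring
    rw [h1, h2, hnc2]
    exact Finset.sum_mul_sq_le_sq_mul_sq Finset.univ c _
  set ρ : ℝ := min (D*A/2) (min (ε*B) (2*η*μ)) with hρdef
  have hρ' : 0 < ρ := lt_min (by positivity) (lt_min (by positivity) (by positivity))
  have hρ1 : ρ ≤ D*A/2 := min_le_left _ _
  have hρ2 : ρ ≤ ε*B := le_trans (min_le_right _ _) (min_le_left _ _)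
  have hρ3 : ρ ≤ 2*η*μ := le_trans (min_le_right _ _) (min_le_right _ _)
  clear_value ρ
  set c2 : ℝ := D + ε + B + K with hc2
  have hc2' : 0 < c2 := by positivity
  set lam : ℝ := ρ/(2*c2) with hlam
  have hlam' : 0 < lam := div_pos hρ' (by positivity)
  have hρlam : ρ = 2*lam*c2 := by rw [hlam]; field_simp
  clear_value lam
  have hε2' : ε*(16*A) ≤ B*D := by
    rw [le_div_iff₀ (by positivity : (0:ℝ) < 16*A)] at hε2; linarith
  have hVneg : ∀ t, Vd t ≤ -(2*lam)*V t := by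
    intro t
    have h := keyineq A B D K ε ρ lam c2 η kP μ nc2 na2 ca (q t) (eb t)
      (cu t - ca/na2*q t) (U t - q t^2/na2) (U t) (cu t)
      hη hkP hμ hna hca hnc2' (by rw [hA, hs]) hB hD hε' hε1 hε2' hKbig
      hρ1 hρ2 hρ3 hρ' hc2 hK' hρlam hlam'.le (hW t) (hR t) (by ring) (by ring)
    simpa only [hVddef, hVdef] using h
  -- Gronwall
  have hg : ∀ t, HasDerivAt (fun t => V t * Real.exp (2*lam*t))
      ((Vd t + 2*lam*V t)*Real.exp (2*lam*t)) t := by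
    intro t
    have he : HasDerivAt (fun t : ℝ => Real.exp (2*lam*t)) (2*lam*Real.exp (2*lam*t)) t := by
      have h1 : HasDerivAt (fun t : ℝ => 2*lam*t) (2*lam) t := by
        simpa using (hasDerivAt_id t).const_mul (2*lam)
      simpa [mul_comm] using h1.exp
    have := (hVd t).mul he
    exact this.congr_deriv (by ring)
  have hmono : Antitone (fun t => V t * Real.exp (2*lam*t)) := by
    apply antitone_of_deriv_nonpos
    · intro t; exact (hg t).differentiableAt
    · intro t
      rw [(hg t).deriv]
      have h1 := hVneg t
      have h2 : Vd t + 2*lam*V t ≤ 0 := by linarith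
      exact mul_nonpos_of_nonpos_of_nonneg h2 (Real.exp_nonneg _)
  have hVdecay : ∀ t, 0 ≤ t → V t * Real.exp (2*lam*t) ≤ V 0 := by
    intro t ht
    have := hmono ht
    simpa using this
  -- comparison with U + eb²
  set c1 : ℝ := min (B/2) (min (D*na2/2) K) with hc1
  have hc1' : 0 < c1 := lt_min (by positivity) (lt_min (by positivity) hK')
  have hc1a : c1 ≤ B/2 := min_le_left _ _
  have hc1b : c1 ≤ D*na2/2 := le_trans (min_le_right _ _) (min_le_left _ _)
  have hc1c : c1 ≤ K := le_trans (min_le_right _ _) (min_le_right _ _)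
  clear_value c1
  have hε3 : 4*ε^2 ≤ B*D := by
    have h := mul_le_mul_of_nonneg_right hε1 hε'.le
    have hBD : (0:ℝ) ≤ B*D := by positivity
    linarith [h, hε2', hBD]
  have hlow : ∀ t, c1*(U t + eb t^2) ≤ V t := by
    intro t
    have hR0 := hR t
    have hVt : V t = D*q t^2 - 2*ε*(q t*eb t) + B*eb t^2 + K*(U t - q t^2/na2) := by
      rw [hVdef]
    have hy : 2*ε*(q t*eb t) ≤ D/2*q t^2 + B/2*eb t^2 := by
      have hnum : 0 ≤ (D*q t - 2*ε*eb t)^2 + (B*D - 4*ε^2)*eb t^2 :=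
        add_nonneg (sq_nonneg _)
          (mul_nonneg (by linarith : (0:ℝ) ≤ B*D - 4*ε^2) (sq_nonneg (eb t)))
      have hdiff : D/2*q t^2 + B/2*eb t^2 - 2*ε*(q t*eb t)
          = ((D*q t - 2*ε*eb t)^2 + (B*D - 4*ε^2)*eb t^2)/(2*D) := by
        field_simp; ring
      linarith [div_nonneg hnum (by positivity : (0:ℝ) ≤ 2*D)]
    have hsplit : U t = (U t - q t^2/na2) + q t^2/na2 := by ring
    have h1 : c1*(U t - q t^2/na2) ≤ K*(U t - q t^2/na2) := mul_le_mul_of_nonneg_right hc1c hR0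
    have h2 : c1*(q t^2/na2) ≤ D/2*q t^2 := by
      have := mul_le_mul_of_nonneg_right hc1b (div_nonneg (sq_nonneg (q t)) hna.le)
      have heq : D*na2/2*(q t^2/na2) = D/2*q t^2 := by field_simp
      linarith
    have h3 : c1*eb t^2 ≤ B/2*eb t^2 := mul_le_mul_of_nonneg_right hc1a (sq_nonneg _)
    rw [hVt]
    linarith [h1, h2, h3, hy]
  set M : ℝ := (D+ε)*na2 + K + B + ε with hM
  have hM' : 0 < M := by positivity
  have hup : ∀ t, V t ≤ M*(U t + eb t^2) := by
    intro t
    have hR0 := hR t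
    have hU0' := hU0 t
    have hcs0 := hcs t
    have hVt : V t = D*q t^2 - 2*ε*(q t*eb t) + B*eb t^2 + K*(U t - q t^2/na2) := by
      rw [hVdef]
    have hy : -(2*ε)*(q t*eb t) ≤ ε*q t^2 + ε*eb t^2 := by
      have h := mul_nonneg hε'.le (sq_nonneg (q t + eb t))
      linarith [h]
    have h1 : K*(U t - q t^2/na2) ≤ K*U t := by
      have : U t - q t^2/na2 ≤ U t := by
        have : 0 ≤ q t^2/na2 := div_nonneg (sq_nonneg _) hna.le
        linarith
      exact mul_le_mul_of_nonneg_left this hK'.le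
    have h2 : (D+ε)*q t^2 ≤ (D+ε)*na2*U t := by
      have h := mul_le_mul_of_nonneg_left hcs0 (by positivity : (0:ℝ) ≤ D+ε)
      linarith [h]
    rw [hVt, hM]
    linarith [h1, h2, hy, mul_nonneg (by positivity : (0:ℝ) ≤ B+ε) hU0',
      mul_nonneg (by positivity : (0:ℝ) ≤ (D+ε)*na2 + K) (sq_nonneg (eb t))]
  -- conclusion
  refine ⟨Real.sqrt (M/c1), lam, Real.sqrt_pos.mpr (by positivity), hlam', ?_⟩
  intro t ht
  show Real.sqrt (U t + eb t^2) ≤ _ * Real.exp (-lam*t) * Real.sqrt (U 0 + eb 0^2)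
  have hexp : (0:ℝ) < Real.exp (2*lam*t) := Real.exp_pos _
  have hd1 : c1*(U t + eb t^2) * Real.exp (2*lam*t) ≤ M*(U 0 + eb 0^2) := by
    have a1 := hlow t
    have a2 := hVdecay t ht
    have a3 := hup 0
    have a4 : c1*(U t + eb t^2) * Real.exp (2*lam*t) ≤ V t * Real.exp (2*lam*t) :=
      mul_le_mul_of_nonneg_right a1 hexp.le
    linarith
  have hd2 : U t + eb t^2 ≤ M/c1*(U 0 + eb 0^2)*Real.exp (-lam*t)^2 := by
    have he2 : Real.exp (-lam*t)^2 = (Real.exp (2*lam*t))⁻¹ := by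
      rw [sq, ← Real.exp_add, ← Real.exp_neg]
      congr 1
      ring
    have h5 : U t + eb t^2 ≤ M*(U 0 + eb 0^2)/Real.exp (2*lam*t)/c1 := by
      rw [div_div, le_div_iff₀ (by positivity : (0:ℝ) < Real.exp (2*lam*t) * c1)]
      calc (U t + eb t^2) * (Real.exp (2*lam*t) * c1)
          = c1*(U t + eb t^2) * Real.exp (2*lam*t) := by ring
        _ ≤ M*(U 0 + eb 0^2) := hd1
    calc U t + eb t^2 ≤ M*(U 0 + eb 0^2)/Real.exp (2*lam*t)/c1 := h5
      _ = M/c1*(U 0 + eb 0^2)*(Real.exp (2*lam*t))⁻¹ := by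
          rw [div_div, div_eq_mul_inv, div_eq_mul_inv]
          ring
      _ = M/c1*(U 0 + eb 0^2)*Real.exp (-lam*t)^2 := by rw [he2]
  have hU0t := hU0 t
  have hfin := Real.sqrt_le_sqrt hd2
  calc Real.sqrt (U t + eb t^2)
      ≤ Real.sqrt (M/c1*(U 0 + eb 0^2)*Real.exp (-lam*t)^2) := hfin
    _ = Real.sqrt (M/c1) * Real.exp (-lam*t) * Real.sqrt (U 0 + eb 0^2) := by
        rw [show M/c1*(U 0 + eb 0^2)*Real.exp (-lam*t)^2
            = (M/c1)*(Real.exp (-lam*t)^2*(U 0 + eb 0^2)) by ring]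
        rw [Real.sqrt_mul (by positivity), Real.sqrt_mul (by positivity)]
        rw [Real.sqrt_sq (Real.exp_nonneg _)]
        ring





set_option maxHeartbeats 1000000 in
theorem stmt13 (m : ℕ) (C Ct Chat : Matrix (Fin 1) (Fin m) ℝ) (hChat : Chat = C + Ct)
    (η kP μ : ℝ) (hη : 0 < η) (hkP : 0 < kP) (hμ : 0 < μ)
    (hsmall : Real.sqrt (∑ j, Ct 0 j ^ 2)
      < min μ ((Chat * (Chatᵀ * Chat + μ • (1 : Matrix (Fin m) (Fin m) ℝ))⁻¹ * Chatᵀ) 0 0))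
    (u : ℝ → Fin m → ℝ) (eb : ℝ → ℝ)
    (hu : ∀ t j, HasDerivAt (fun s => u s j)
      (-η * ((∑ j', Chat 0 j * Chat 0 j' * u t j') + μ * u t j - Chat 0 j * eb t)) t)
    (heb : ∀ t, HasDerivAt eb (-kP * ∑ j, C 0 j * u t j) t) :
    ∃ k lam : ℝ, 0 < k ∧ 0 < lam ∧
      ∀ t ≥ (0 : ℝ), Real.sqrt ((∑ j, u t j ^ 2) + eb t ^ 2)
        ≤ k * Real.exp (-lam * t) * Real.sqrt ((∑ j, u 0 j ^ 2) + eb 0 ^ 2) := by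
  have hna0 : (0:ℝ) ≤ ∑ j, Chat 0 j ^ 2 := Finset.sum_nonneg fun j _ => sq_nonneg _
  set na2 : ℝ := ∑ j, Chat 0 j ^ 2 with hna2
  set s : ℝ := μ + na2 with hs
  have hs' : 0 < s := by positivity
  -- Chat * Chatᵀ = na2 • 1
  have hCC : Chat * Chatᵀ = na2 • (1 : Matrix (Fin 1) (Fin 1) ℝ) := by
    ext i j
    fin_cases i; fin_cases j
    simp [Matrix.mul_apply, Matrix.one_apply, hna2, sq]
  have hABmul : (Chatᵀ * Chat + μ • (1 : Matrix (Fin m) (Fin m) ℝ))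
      * ((1/μ) • ((1 : Matrix (Fin m) (Fin m) ℝ) - s⁻¹ • (Chatᵀ * Chat))) = 1 := by
    have h4 : Chatᵀ * Chat * (Chatᵀ * Chat) = na2 • (Chatᵀ * Chat) := by
      calc Chatᵀ * Chat * (Chatᵀ * Chat) = Chatᵀ * (Chat * Chatᵀ) * Chat := by
            rw [Matrix.mul_assoc, Matrix.mul_assoc, Matrix.mul_assoc]
        _ = na2 • (Chatᵀ * Chat) := by
            rw [hCC]
            simp [Matrix.mul_smul, Matrix.smul_mul, Matrix.mul_assoc]
    rw [Matrix.mul_smul, mul_sub, Matrix.mul_one, Matrix.mul_smul, add_mul, h4,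
      Matrix.smul_mul, Matrix.one_mul]
    rw [smul_add, smul_smul, smul_smul, ← add_smul]
    have h5 : s⁻¹ * na2 + s⁻¹ * μ = 1 := by
      rw [hs]; field_simp; ring
    rw [h5, one_smul, add_sub_cancel_left, smul_smul]
    rw [one_div, inv_mul_cancel₀ hμ.ne', one_smul]
  have hinv : (Chatᵀ * Chat + μ • (1 : Matrix (Fin m) (Fin m) ℝ))⁻¹
      = (1/μ) • ((1 : Matrix (Fin m) (Fin m) ℝ) - s⁻¹ • (Chatᵀ * Chat)) :=
    Matrix.inv_eq_right_inv hABmul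
  have hentry : (Chat * (Chatᵀ * Chat + μ • (1 : Matrix (Fin m) (Fin m) ℝ))⁻¹ * Chatᵀ) 0 0
      = na2/s := by
    rw [hinv]
    have h6 : Chat * ((1/μ) • ((1 : Matrix (Fin m) (Fin m) ℝ) - s⁻¹ • (Chatᵀ * Chat))) * Chatᵀ
        = ((1/μ) * (na2 - s⁻¹ * (na2 * na2))) • (1 : Matrix (Fin 1) (Fin 1) ℝ) := by
      simp only [Matrix.mul_sub, Matrix.sub_mul, Matrix.mul_smul, Matrix.smul_mul,
        Matrix.mul_assoc, hCC, Matrix.mul_one, smul_smul, smul_sub, sub_smul, mul_assoc]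
      rw [← sub_smul]
      ring_nf
    rw [h6]
    have : na2/s = (1/μ) * (na2 - s⁻¹ * (na2 * na2)) := by
      rw [hs]; field_simp; ring
    rw [this]
    simp [Matrix.smul_apply, Matrix.one_apply]
  rw [hentry] at hsmall
  clear_value na2 s
  set nd2 : ℝ := ∑ j, Ct 0 j ^ 2 with hnd2def
  have hnd0 : 0 ≤ nd2 := Finset.sum_nonneg fun j _ => sq_nonneg _
  clear_value nd2
  have h1 : Real.sqrt nd2 < μ := lt_of_lt_of_le hsmall (min_le_left _ _)
  have h2 : Real.sqrt nd2 < na2/s := lt_of_lt_of_le hsmall (min_le_right _ _)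
  have h3 : 0 < na2/s := lt_of_le_of_lt (Real.sqrt_nonneg _) h2
  have hna : 0 < na2 := by
    have h5 := mul_pos h3 hs'
    rw [div_mul_cancel₀ _ hs'.ne'] at h5
    exact h5
  have hsqna : Real.sqrt na2 ^ 2 = na2 := Real.sq_sqrt hna.le
  have hsqnd : Real.sqrt nd2 ^ 2 = nd2 := Real.sq_sqrt hnd0
  have h0na : 0 ≤ Real.sqrt na2 := Real.sqrt_nonneg _
  have h0nd : 0 ≤ Real.sqrt nd2 := Real.sqrt_nonneg _
  have hsa : Real.sqrt nd2 < Real.sqrt na2 := by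
    rcases le_or_gt μ (Real.sqrt na2) with h | h
    · exact lt_of_lt_of_le h1 h
    · have hle : na2/s ≤ Real.sqrt na2 := by
        rw [div_le_iff₀ hs', hs]
        nlinarith [mul_nonneg h0na (le_of_lt (by nlinarith : (0:ℝ) < μ + na2 - Real.sqrt na2))]
      linarith
  have hnd2na2 : nd2 < na2 := by nlinarith
  have hcs2 : (∑ j, Ct 0 j * Chat 0 j)^2 ≤ nd2 * na2 := by
    have := Finset.sum_mul_sq_le_sq_mul_sq Finset.univ (fun j => Ct 0 j) (fun j => Chat 0 j)
    simpa [hnd2def, hna2] using this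
  have hda : ∑ j, Ct 0 j * Chat 0 j < na2 := by
    nlinarith [hcs2, sq_nonneg ((∑ j, Ct 0 j * Chat 0 j) - na2),
      sq_nonneg ((∑ j, Ct 0 j * Chat 0 j) + na2)]
  have hca : 0 < ∑ j, C 0 j * Chat 0 j := by
    have hCj : ∀ j, C 0 j = Chat 0 j - Ct 0 j := by
      intro j; rw [hChat]; simp
    have he : ∀ j : Fin m, C 0 j * Chat 0 j = Chat 0 j ^ 2 - Ct 0 j * Chat 0 j := by
      intro j; rw [hCj j]; ring
    rw [Finset.sum_congr rfl (fun j _ => he j), Finset.sum_sub_distrib]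
    rw [← hna2]
    linarith
  exact aux m (fun j => Chat 0 j) (fun j => C 0 j) η kP μ hη hkP hμ
    (by simpa [← hna2] using hna) hca u eb hu heb
end

section
/- Let x ∈ ℝ^m be nonzero and a > 0. The rank-one ODE system driven by the transfer function 1/(s+a), i.e., δq' = −a δq + ξ where ξ is a sinusoid ξ(t) = Σ_{i=1}^{m} v_i sin(ω_i t) with distinct frequencies ω_i > 0 and {v_i} spanning ℝ^m, produces a signal δq whose steady state satisfies: the matrix ∫_t^{t+T} δq(s)δq(s)⊤ ds is positive definite for T = 2π·lcm-period and all sufficiently large t. -/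
open Complex in
noncomputable def expChar (b : ℝ) : Multiplicative ℝ →* ℂ where
  toFun t := Complex.exp (b * (Multiplicative.toAdd t) * I)
  map_one' := by simp
  map_mul' s t := by
    simp only [toAdd_mul]
    rw [← Complex.exp_add]
    push_cast
    ring_nf

open Complex in
lemma expChar_injective : Function.Injective expChar := by
  intro b b' h
  by_contra hne
  have hval := DFunLike.congr_fun h (Multiplicative.ofAdd (Real.pi / (b' - b)))
  simp only [expChar, MonoidHom.coe_mk, OneHom.coe_mk, toAdd_ofAdd] at hval
  have hd : b' - b ≠ 0 := sub_ne_zero.mpr (Ne.symm hne)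
  have hd' : (b' : ℂ) - b ≠ 0 := by
    rw [← Complex.ofReal_sub]; exact Complex.ofReal_ne_zero.mpr hd
  have harg : (b' : ℂ) * ((Real.pi / (b' - b) : ℝ) : ℂ) * I
      = (b : ℂ) * ((Real.pi / (b' - b) : ℝ) : ℂ) * I + Real.pi * I := by
    push_cast
    field_simp
    ring
  rw [harg, Complex.exp_add, Complex.exp_pi_mul_I, mul_neg_one] at hval
  have hz := Complex.exp_ne_zero ((b : ℂ) * ((Real.pi / (b' - b) : ℝ) : ℂ) * I)
  have : (2 : ℂ) * Complex.exp ((b : ℂ) * ((Real.pi / (b' - b) : ℝ) : ℂ) * I) = 0 := by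
    linear_combination hval
  simp [hz] at this

open Complex in
lemma complexSin_expand (z : ℂ) :
    Complex.sin z = Complex.exp (-z * I) * (I / 2) + Complex.exp (z * I) * (-(I / 2)) := by
  rw [Complex.sin]
  ring

open Complex in
lemma sin_indep {m : ℕ} (ω : Fin m → ℝ) (hω : Function.Injective ω) (hωpos : ∀ i, 0 < ω i)
    (c : Fin m → ℝ) (H : ∀ t : ℝ, ∑ i, c i * Real.sin (ω i * t) = 0) : ∀ i, c i = 0 := by
  set β : Fin m ⊕ Fin m → ℝ := Sum.elim (fun i => -(ω i)) ω with hβ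
  have hβinj : Function.Injective β := by
    rintro (p | p) (q | q) hpq <;> simp only [β, Sum.elim_inl, Sum.elim_inr, neg_inj] at hpq
    · exact congrArg Sum.inl (hω hpq)
    · exact absurd hpq (by nlinarith [hωpos p, hωpos q])
    · exact absurd hpq (by nlinarith [hωpos p, hωpos q])
    · exact congrArg Sum.inr (hω hpq)
  have li := (linearIndependent_monoidHom (Multiplicative ℝ) ℂ).comp (expChar ∘ β)
    (expChar_injective.comp hβinj)
  set d : Fin m ⊕ Fin m → ℂ :=
    Sum.elim (fun i => (c i : ℂ) * (I / 2)) (fun i => (c i : ℂ) * (-(I / 2))) with hd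
  have hsum : ∑ j, d j • (⇑(expChar (β j)) : Multiplicative ℝ → ℂ) = 0 := by
    funext g
    have hHt : ((∑ i, c i * Real.sin (ω i * Multiplicative.toAdd g) : ℝ) : ℂ) = 0 := by
      rw [H (Multiplicative.toAdd g)]; norm_num
    push_cast at hHt
    simp only [Finset.sum_apply, Pi.smul_apply, Pi.zero_apply, smul_eq_mul, Function.comp_apply,
      Fintype.sum_sum_type, hd, Sum.elim_inl, Sum.elim_inr, hβ, expChar, MonoidHom.coe_mk,
      OneHom.coe_mk]
    rw [← hHt, ← Finset.sum_add_distrib]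
    apply Finset.sum_congr rfl
    intro i _
    rw [complexSin_expand ((ω i : ℂ) * ((Multiplicative.toAdd g : ℝ) : ℂ))]
    push_cast
    ring
  have hz := Fintype.linearIndependent_iff.mp li d hsum
  intro i
  have h0 := hz (Sum.inl i)
  simp only [hd, Sum.elim_inl, mul_eq_zero, Complex.ofReal_eq_zero, div_eq_zero_iff,
    Complex.I_ne_zero, false_or] at h0
  rcases h0 with h | h
  · exact h
  · norm_num at h

open Complex Filter in
lemma sin_zero_extend {m : ℕ} (ω : Fin m → ℝ) (c : Fin m → ℝ) (t : ℝ)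
    (H : ∀ s ∈ Set.Ioo t (t + 1), ∑ i, c i * Real.sin (ω i * s) = 0) :
    ∀ s : ℝ, ∑ i, c i * Real.sin (ω i * s) = 0 := by
  set G : ℂ → ℂ := fun z => ∑ i, (c i : ℂ) * Complex.sin (ω i * z) with hGdef
  have hGre : ∀ r : ℝ, G r = ((∑ i, c i * Real.sin (ω i * r) : ℝ) : ℂ) := by
    intro r
    rw [hGdef]
    push_cast
    rfl
  have hG : Differentiable ℂ G := by
    apply Differentiable.fun_sum
    intro i _
    exact (differentiable_const _).mul (Complex.differentiable_sin.comp
      (differentiable_id.const_mul _))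
  have hA : AnalyticOnNhd ℂ G Set.univ := fun z _ => hG.analyticAt z
  set z₀ : ℂ := ((t + 1/2 : ℝ) : ℂ) with hz₀
  have hfreq : ∃ᶠ z in nhdsWithin z₀ {z₀}ᶜ, G z = 0 := by
    set u : ℕ → ℂ := fun n => ((t + 1/2 + 1/(n + 3) : ℝ) : ℂ) with hu
    have hmem : ∀ n : ℕ, (t + 1/2 + 1/((n : ℝ) + 3)) ∈ Set.Ioo t (t + 1) := by
      intro n
      constructor
      · have : 0 < 1/((n : ℝ) + 3) := by positivity
        linarith
      · have h3 : (3 : ℝ) ≤ (n : ℝ) + 3 := by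
          have : (0:ℝ) ≤ (n:ℝ) := Nat.cast_nonneg n
          linarith
        have : 1/((n : ℝ) + 3) ≤ 1/3 := by
          apply one_div_le_one_div_of_le <;> linarith
        linarith
    have htend : Tendsto u atTop (nhdsWithin z₀ {z₀}ᶜ) := by
      rw [tendsto_nhdsWithin_iff]
      constructor
      · rw [hu, hz₀]
        have h1 : Tendsto (fun n : ℕ => 1/((n : ℝ) + 3)) atTop (nhds 0) := by
          have hcomp : Tendsto (fun n : ℕ => (n : ℝ) + 3) atTop atTop :=
            tendsto_natCast_atTop_atTop.atTop_add tendsto_const_nhds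
          simpa [one_div, Function.comp_def] using tendsto_inv_atTop_zero.comp hcomp
        have h2 : Tendsto (fun n : ℕ => t + 1/2 + 1/((n : ℝ) + 3)) atTop (nhds (t + 1/2)) := by
          have := h1.const_add (t + 1/2)
          simpa using this
        exact (Complex.continuous_ofReal.tendsto _).comp h2
      · filter_upwards with n
        rw [hu, hz₀]
        simp only [Set.mem_compl_iff, Set.mem_singleton_iff, ne_eq, Complex.ofReal_inj]
        intro hcon
        have : 1/((n : ℝ) + 3) = 0 := by linarith
        have : (0:ℝ) < 1/((n : ℝ) + 3) := by positivity
        linarith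
    apply htend.frequently
    apply Filter.Eventually.frequently
    filter_upwards with n
    rw [hu, hGre, H _ (hmem n), Complex.ofReal_zero]
  have hzero := hA.eqOn_zero_of_preconnected_of_frequently_eq_zero isPreconnected_univ
    (Set.mem_univ z₀) hfreq
  intro s
  have h := hzero (Set.mem_univ ((s : ℝ) : ℂ))
  rw [Pi.zero_apply] at h
  rw [hGre s] at h
  exact_mod_cast h

/- Filtering a sufficiently rich sum of sinusoids (distinct positive frequencies,
   direction vectors spanning ℝ^m) through the stable filter 1/(s+a) yields a
   persistently exciting signal: for some window length T > 0 the windowed Gram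
   matrix ∫_t^{t+T} δq δqᵀ ds is positive definite for all sufficiently large t. -/
theorem stmt19 (m : ℕ) (a : ℝ) (ha : 0 < a)
    (ω : Fin m → ℝ) (hω : Function.Injective ω) (hωpos : ∀ i, 0 < ω i)
    (v : Fin m → Fin m → ℝ) (hv : Submodule.span ℝ (Set.range v) = ⊤)
    (δq : ℝ → Fin m → ℝ)
    (hδq : ∀ t, HasDerivAt δq (-a • δq t + ∑ i, Real.sin (ω i * t) • v i) t) :
    ∃ T > (0 : ℝ), ∃ t₀ : ℝ, 0 ≤ t₀ ∧ ∀ t ≥ t₀,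
      ∀ x : Fin m → ℝ, x ≠ 0 →
        0 < ∫ s in t..(t + T), (∑ j, δq s j * x j) ^ 2 := by
  refine ⟨1, one_pos, 0, le_refl 0, ?_⟩
  intro t _ x hx
  set f : ℝ → ℝ := fun s => ∑ j, δq s j * x j with hf
  have hcont : Continuous δq := by
    rw [continuous_iff_continuousAt]
    intro s
    exact (hδq s).continuousAt
  have hfc : Continuous f := by
    apply continuous_finset_sum
    intro j _
    exact ((continuous_apply j).comp hcont).mul continuous_const
  have hint : IntervalIntegrable (fun s => f s ^ 2) MeasureTheory.volume t (t + 1) :=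
    (hfc.pow 2).intervalIntegrable _ _
  show 0 < ∫ s in t..(t + 1), f s ^ 2
  rw [intervalIntegral.integral_pos_iff_support_of_nonneg_ae
    (Filter.Eventually.of_forall fun s => sq_nonneg (f s)) hint]
  refine ⟨by linarith, ?_⟩
  by_contra hmeas
  push_neg at hmeas
  have hμ0 : MeasureTheory.volume
      (Function.support (fun s => f s ^ 2) ∩ Set.Ioc t (t + 1)) = 0 :=
    le_antisymm hmeas (zero_le)
  set U : Set ℝ := Set.Ioo t (t + 1) ∩ {s | f s ≠ 0} with hU
  have hUopen : IsOpen U :=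
    isOpen_Ioo.inter (isOpen_compl_singleton.preimage hfc)
  have hUsub : U ⊆ Function.support (fun s => f s ^ 2) ∩ Set.Ioc t (t + 1) := by
    rintro s ⟨hs1, hs2⟩
    exact ⟨pow_ne_zero 2 hs2, Set.Ioo_subset_Ioc_self hs1⟩
  have hU0 : MeasureTheory.volume U = 0 := MeasureTheory.measure_mono_null hUsub hμ0
  have hUempty : U = ∅ := by
    by_contra hne
    exact absurd hU0
      (ne_of_gt (hUopen.measure_pos MeasureTheory.volume (Set.nonempty_iff_ne_empty.mpr hne)))
  have hf0 : ∀ s ∈ Set.Ioo t (t + 1), f s = 0 := by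
    intro s hs
    by_contra h
    have hsU : s ∈ U := ⟨hs, h⟩
    rw [hUempty] at hsU
    exact hsU
  -- derivative of f
  have hfd : ∀ s, HasDerivAt f
      (∑ j, ((-a • δq s + ∑ i, Real.sin (ω i * s) • v i) j) * x j) s := by
    intro s
    apply HasDerivAt.fun_sum
    intro j _
    exact ((hasDerivAt_pi.mp (hδq s)) j).mul_const (x j)
  have hkey : ∀ s ∈ Set.Ioo t (t + 1),
      ∑ i, (∑ j, v i j * x j) * Real.sin (ω i * s) = 0 := by
    intro s hs
    have hev : f =ᶠ[nhds s] (fun _ => (0 : ℝ)) := by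
      filter_upwards [isOpen_Ioo.mem_nhds hs] with r hr using hf0 r hr
    have h1 : HasDerivAt f 0 s := (hasDerivAt_const s (0 : ℝ)).congr_of_eventuallyEq hev
    have h2 := (hfd s).unique h1
    have hfs : f s = 0 := hf0 s hs
    have expand : (∑ j, ((-a • δq s + ∑ i, Real.sin (ω i * s) • v i) j) * x j)
        = -a * f s + ∑ i, (∑ j, v i j * x j) * Real.sin (ω i * s) := by
      simp only [hf, Pi.add_apply, Pi.smul_apply, Pi.neg_apply, Finset.sum_apply,
        smul_eq_mul, add_mul, Finset.sum_add_distrib, Finset.sum_mul, Finset.mul_sum,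
        neg_mul]
      congr 1
      · apply Finset.sum_congr rfl
        intro j _
        ring
      · rw [Finset.sum_comm]
        apply Finset.sum_congr rfl
        intro j _
        apply Finset.sum_congr rfl
        intro i _
        ring
    rw [expand, hfs] at h2
    linarith
  have hc := sin_indep ω hω hωpos (fun i => ∑ j, v i j * x j)
    (sin_zero_extend ω (fun i => ∑ j, v i j * x j) t hkey)
  have hx0 : ∀ y : Fin m → ℝ, y ∈ Submodule.span ℝ (Set.range v) → ∑ j, y j * x j = 0 := by
    intro y hy
    induction hy using Submodule.span_induction with
    | mem y hy => obtain ⟨i, rfl⟩ := hy; exact hc i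
    | zero => simp
    | add y z _ _ hy hz =>
      simp only [Pi.add_apply, add_mul, Finset.sum_add_distrib, hy, hz, add_zero]
    | smul r y _ hy =>
      simp only [Pi.smul_apply, smul_eq_mul, mul_assoc, ← Finset.mul_sum, hy, mul_zero]
  have hsq : ∑ j, x j * x j = 0 := hx0 x (hv ▸ Submodule.mem_top)
  apply hx
  funext j
  have := (Finset.sum_eq_zero_iff_of_nonneg
    (fun j _ => mul_self_nonneg (x j))).mp hsq j (Finset.mem_univ j)
  exact mul_self_eq_zero.mp this
end
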